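/- Let k ≥ 2 be an integer, let ρ > 0 be real, and let α₁, …, α_n be complex numbers such that |α_j| ≤ ρ for all j and α_{j₀} = 0 for at least one index j₀. Then for every real number x with x ≤ −ρ/sin(π/(2k)), the sum over j = 1, …, n of the real parts of (−1)^{k−1}/(x − α_j)^k is strictly negative. -/

import Mathlib

/-!
Write `c = -x > 0` and `wⱼ = αⱼ - x`, so that the summand equals `-Re (wⱼ ^ k)⁻¹`. Each `wⱼ` lies
in the closed disc of radius `ρ ≤ c · sin (π / (2k))` about `c`, which is seen from the origin
under the half-angle `π / (2k)`; hence `|k · arg wⱼ| ≤ π / 2`, so `Re (wⱼ ^ k) ≥ 0` and every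
summand is `≤ 0`. The summand for `αⱼ₀ = 0` is `-c⁻ᵏ < 0`.
-/

open Real Complex

namespace Complex

theorem re_pow_eq_norm_pow_mul_cos (w : ℂ) (k : ℕ) :
    (w ^ k).re = ‖w‖ ^ k * Real.cos (k * arg w) := by
  conv_lhs => rw [← norm_mul_cos_add_sin_mul_I w]
  rw [mul_pow, cos_add_sin_mul_I_pow, ← ofReal_pow, re_ofReal_mul]
  norm_cast
  rw [add_re, ofReal_re, mul_I_re, ofReal_im, neg_zero, add_zero]

theorem cos_mul_norm_le_re_of_norm_sub_le {w : ℂ} {c θ : ℝ} (hc : 0 < c)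
    (hw : ‖w - c‖ ≤ c * Real.sin θ) : Real.cos θ * ‖w‖ ≤ w.re := by
  have hdist : ‖w - c‖ ^ 2 = ‖w‖ ^ 2 - 2 * c * w.re + c ^ 2 := by
    simp only [Complex.sq_norm, normSq_apply, sub_re, sub_im, ofReal_re, ofReal_im]
    ring
  have hradius : (c * Real.sin θ) ^ 2 = c ^ 2 - (c * Real.cos θ) ^ 2 := by
    linear_combination c ^ 2 * Real.sin_sq_add_cos_sq θ
  have hdisc : ‖w - c‖ ^ 2 ≤ (c * Real.sin θ) ^ 2 := pow_le_pow_left₀ (norm_nonneg _) hw 2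
  -- `2 c cos θ ‖w‖ ≤ ‖w‖² + c² cos² θ ≤ 2 c Re w`, by AM-GM and the disc condition
  refine le_of_mul_le_mul_left ?_ hc
  nlinarith [sq_nonneg (‖w‖ - c * Real.cos θ)]

theorem abs_arg_le_of_cos_mul_norm_le_re {w : ℂ} {θ : ℝ} (hθ₀ : 0 ≤ θ) (hθ : θ ≤ π)
    (hw : Real.cos θ * ‖w‖ ≤ w.re) : |arg w| ≤ θ := by
  rcases eq_or_ne w 0 with rfl | hw0
  · simpa using hθ₀
  have hcos : Real.cos θ ≤ Real.cos |arg w| := by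
    rwa [Real.cos_abs, cos_arg hw0, le_div_iff₀ (norm_pos_iff.2 hw0)]
  exact (strictAntiOn_cos.le_iff_ge ⟨hθ₀, hθ⟩ ⟨abs_nonneg _, abs_arg_le_pi w⟩).1 hcos

theorem re_pow_nonneg_of_mul_abs_arg_le {w : ℂ} {k : ℕ} (h : k * |arg w| ≤ π / 2) :
    0 ≤ (w ^ k).re := by
  rw [re_pow_eq_norm_pow_mul_cos, ← Real.cos_abs, abs_mul, Nat.abs_cast]
  have hnonneg : 0 ≤ (k : ℝ) * |arg w| := by positivity
  exact mul_nonneg (by positivity) (Real.cos_nonneg_of_mem_Icc ⟨by linarith [pi_pos], h⟩)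

theorem re_pow_nonneg_of_norm_sub_le {w : ℂ} {c : ℝ} {k : ℕ} (hk : k ≠ 0) (hc : 0 < c)
    (hw : ‖w - c‖ ≤ c * Real.sin (π / (2 * k))) : 0 ≤ (w ^ k).re := by
  have hk₁ : (1 : ℝ) ≤ k := by exact_mod_cast Nat.one_le_iff_ne_zero.2 hk
  have harg : |arg w| ≤ π / (2 * k) :=
    abs_arg_le_of_cos_mul_norm_le_re (by positivity) (div_le_self pi_pos.le (by linarith))
      (cos_mul_norm_le_re_of_norm_sub_le hc hw)
  refine re_pow_nonneg_of_mul_abs_arg_le ?_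
  calc (k : ℝ) * |arg w| ≤ k * (π / (2 * k)) := by gcongr
    _ = π / 2 := by field_simp

theorem neg_one_pow_pred_div_sub_pow {k : ℕ} (hk : k ≠ 0) (z a : ℂ) :
    (-1) ^ (k - 1) / (z - a) ^ k = -((a - z) ^ k)⁻¹ := by
  rw [← neg_sub a z, neg_pow (a - z), ← pow_sub_one_mul hk, mul_assoc, ← div_div,
    div_self (pow_ne_zero _ (by norm_num)), neg_one_mul, one_div, inv_neg]

end Complex

/-- Let `k ≥ 2`, `ρ > 0`, and `α₁, …, αₙ` be complex numbers of modulus at most `ρ`,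
one of which is `0`. Then for every real `x ≤ -ρ·csc(π/(2k))`, the sum of the real
parts of `(-1)^(k-1)/(x - αⱼ)^k` is strictly negative. -/
theorem stmt13 (k : ℕ) (hk : 2 ≤ k) (ρ : ℝ) (hρ : 0 < ρ) (n : ℕ) (α : Fin n → ℂ)
    (hα : ∀ j, ‖α j‖ ≤ ρ) (h0 : ∃ j₀, α j₀ = 0)
    (x : ℝ) (hx : x ≤ -(ρ / Real.sin (Real.pi / (2 * k)))) :
    ∑ j, (((-1 : ℂ) ^ (k - 1)) / ((x : ℂ) - α j) ^ k).re < 0 := by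
  obtain ⟨j₀, hj₀⟩ := h0
  have hk₀ : k ≠ 0 := by omega
  have hsin : 0 < Real.sin (π / (2 * k)) :=
    sin_pos_of_pos_of_lt_pi (by positivity) (div_lt_self pi_pos (by norm_cast; omega))
  have hρx : ρ ≤ -x * Real.sin (π / (2 * k)) := by
    rwa [le_neg, div_le_iff₀ hsin] at hx
  have hx₀ : 0 < -x := pos_of_mul_pos_left (hρ.trans_le hρx) hsin.le
  simp_rw [neg_one_pow_pred_div_sub_pow hk₀, neg_re, Finset.sum_neg_distrib, neg_lt_zero]
  refine Finset.sum_pos' (fun j _ => ?_) ⟨j₀, Finset.mem_univ _, ?_⟩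
  · rw [inv_re]
    refine div_nonneg (re_pow_nonneg_of_norm_sub_le hk₀ hx₀ ?_) (normSq_nonneg _)
    simpa using (hα j).trans hρx
  · rw [hj₀, zero_sub, ← ofReal_neg, ← ofReal_pow, ← ofReal_inv, ofReal_re]
    positivity
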